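/- arXiv:math/0601511 — 5 statements merged into one kernel-verified Lean document; each statement's English description precedes it below -/
import Mathlib

section
/- The map ψ is a moment map for the G_V-action on the symplectic vector space E_V in the following sense: for every a = (a_i)_{i∈I} ∈ ∏_{i∈I} End(V_i) and every x ∈ E_V, one has ⟨a·x, x⟩ = 2·Σ_{i∈I} tr(a_i ∘ ψ_i(x)), where (a·x)_h = a_{inc(h)} ∘ x_h − x_h ∘ a_{out(h)}. -/
noncomputable section

/-- Transport a graded vector along an equality of indices. -/
def castLM {I : Type*} (V : I → Type*) [∀ i, AddCommGroup (V i)] [∀ i, Module ℂ (V i)]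
    {i j : I} (hij : i = j) : V i →ₗ[ℂ] V j := by
  subst hij; exact LinearMap.id

/-- The sign function ε associated to an orientation Ω. -/
def epsSign {H : Type*} (Ω : Set H) [DecidablePred (· ∈ Ω)] (h : H) : ℂ :=
  if h ∈ Ω then 1 else -1

/-- The form ⟨x,y⟩ = Σ_{h ∈ H} ε(h) · tr(x_h ∘ y_{h̄}) on E_V. -/
def symForm {I H : Type*} [Fintype H] (out inc : H → I) (bar : H → H)
    (hout : ∀ h, out (bar h) = inc h) (hinc : ∀ h, inc (bar h) = out h)
    (Ω : Set H) [DecidablePred (· ∈ Ω)]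
    (V : I → Type*) [∀ i, AddCommGroup (V i)] [∀ i, Module ℂ (V i)]
    (x y : ∀ h, V (out h) →ₗ[ℂ] V (inc h)) : ℂ :=
  ∑ h : H, epsSign Ω h *
    LinearMap.trace ℂ (V (inc h))
      (x h ∘ₗ castLM V (hinc h) ∘ₗ y (bar h) ∘ₗ castLM V (hout h).symm)

/-- The i-th component of the moment map:
ψ_i(x) = Σ_{h ∈ H, inc(h)=i} ε(h) · x_h ∘ x_{h̄} ∈ End(V_i). -/
def psiMap {I H : Type*} [DecidableEq I] [Fintype H] (out inc : H → I) (bar : H → H)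
    (hout : ∀ h, out (bar h) = inc h) (hinc : ∀ h, inc (bar h) = out h)
    (Ω : Set H) [DecidablePred (· ∈ Ω)]
    (V : I → Type*) [∀ i, AddCommGroup (V i)] [∀ i, Module ℂ (V i)]
    (x : ∀ h, V (out h) →ₗ[ℂ] V (inc h)) (i : I) : V i →ₗ[ℂ] V i :=
  ∑ h : H,
    if hh : inc h = i then
      epsSign Ω h • (castLM V hh ∘ₗ
        (x h ∘ₗ castLM V (hinc h) ∘ₗ x (bar h) ∘ₗ castLM V (hout h).symm) ∘ₗ
        castLM V hh.symm)
    else 0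

/-- The action of the Lie algebra ∏_i End(V_i) on E_V:
(a·x)_h = a_{inc(h)} ∘ x_h − x_h ∘ a_{out(h)}. -/
def lieAct {I H : Type*} (out inc : H → I)
    (V : I → Type*) [∀ i, AddCommGroup (V i)] [∀ i, Module ℂ (V i)]
    (a : ∀ i, V i →ₗ[ℂ] V i) (x : ∀ h, V (out h) →ₗ[ℂ] V (inc h)) :
    ∀ h, V (out h) →ₗ[ℂ] V (inc h) :=
  fun h => a (inc h) ∘ₗ x h - x h ∘ₗ a (out h)

section aux
variable {I : Type*} (V : I → Type*) [∀ i, AddCommGroup (V i)] [∀ i, Module ℂ (V i)]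

lemma castLM_rfl (i : I) (e : i = i) : castLM V e = LinearMap.id := rfl

lemma aNat (a : ∀ i, V i →ₗ[ℂ] V i) {i j : I} (e : i = j) :
    a i = castLM V e.symm ∘ₗ a j ∘ₗ castLM V e := by
  subst e; rfl

lemma castNat {H : Type*} (out inc : H → I) (x : ∀ h, V (out h) →ₗ[ℂ] V (inc h))
    {h1 h2 : H} (e : h1 = h2) :
    x h1 = castLM V (congrArg inc e).symm ∘ₗ x h2 ∘ₗ castLM V (congrArg out e) := by
  subst e; rfl

lemma comp_sum' {α : Type*} {M N P : Type*} [AddCommGroup M] [Module ℂ M]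
    [AddCommGroup N] [Module ℂ N] [AddCommGroup P] [Module ℂ P]
    (f : N →ₗ[ℂ] P) (s : Finset α) (g : α → (M →ₗ[ℂ] N)) :
    f ∘ₗ (∑ i ∈ s, g i) = ∑ i ∈ s, f ∘ₗ g i := by
  ext v; simp

/-- Key per-term lemma (trace cyclicity with casts). -/
lemma key [∀ i, FiniteDimensional ℂ (V i)]
    {i j k l m n : I} (e1 : k = j) (e2 : l = i) (e3 : m = l) (e4 : n = k)
    (em : m = i) (en : n = j)
    (f : V i →ₗ[ℂ] V j) (g : V k →ₗ[ℂ] V l) (aj : V j →ₗ[ℂ] V j)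
    (f' : V m →ₗ[ℂ] V n) (hf' : f' = castLM V en.symm ∘ₗ f ∘ₗ castLM V em)
    (ak : V k →ₗ[ℂ] V k) (hak : ak = castLM V e1.symm ∘ₗ aj ∘ₗ castLM V e1) :
    LinearMap.trace ℂ (V l) ((g ∘ₗ ak) ∘ₗ castLM V e4 ∘ₗ f' ∘ₗ castLM V e3.symm) =
      LinearMap.trace ℂ (V j) ((aj ∘ₗ f) ∘ₗ castLM V e2 ∘ₗ g ∘ₗ castLM V e1.symm) := by
  subst e1; subst e2; subst em; subst en
  simp only [castLM_rfl, LinearMap.id_comp, LinearMap.comp_id] at hf' hak ⊢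
  rw [hf', hak]
  rw [show (g ∘ₗ aj) ∘ₗ f = g ∘ₗ (aj ∘ₗ f) from (LinearMap.comp_assoc _ _ _),
    LinearMap.trace_comp_comm']

end aux

theorem stmt2 {I H : Type*} [Fintype I] [DecidableEq I] [Fintype H]
    (out inc : H → I) (bar : H → H)
    (hinvol : ∀ h, bar (bar h) = h) (hfpf : ∀ h, bar h ≠ h)
    (hout : ∀ h, out (bar h) = inc h) (hinc : ∀ h, inc (bar h) = out h)
    (hnoloop : ∀ h, out h ≠ inc h)
    (Ω : Set H) [DecidablePred (· ∈ Ω)]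
    (hcover : ∀ h, h ∈ Ω ∨ bar h ∈ Ω) (hdisj : ∀ h, ¬(h ∈ Ω ∧ bar h ∈ Ω))
    (V : I → Type*) [∀ i, AddCommGroup (V i)] [∀ i, Module ℂ (V i)]
    [∀ i, FiniteDimensional ℂ (V i)]
    (a : ∀ i, V i →ₗ[ℂ] V i) (x : ∀ h, V (out h) →ₗ[ℂ] V (inc h)) :
    symForm out inc bar hout hinc Ω V (lieAct out inc V a x) x =
      2 * ∑ i : I, LinearMap.trace ℂ (V i)
        (a i ∘ₗ psiMap out inc bar hout hinc Ω V x i) := by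
  classical
  have eps_bar : ∀ h, epsSign Ω (bar h) = - epsSign Ω h := by
    intro h
    rcases hcover h with h1 | h1
    · have h2 : bar h ∉ Ω := fun hb => hdisj h ⟨h1, hb⟩
      simp [epsSign, h1, h2]
    · have h2 : h ∉ Ω := fun hb => hdisj h ⟨hb, h1⟩
      simp [epsSign, h1, h2]
  set T : H → ℂ := fun h => epsSign Ω h *
    LinearMap.trace ℂ (V (inc h))
      ((a (inc h) ∘ₗ x h) ∘ₗ castLM V (hinc h) ∘ₗ x (bar h) ∘ₗ castLM V (hout h).symm)
    with hT
  set B : H → ℂ := fun h => epsSign Ω h *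
    LinearMap.trace ℂ (V (inc h))
      ((x h ∘ₗ a (out h)) ∘ₗ castLM V (hinc h) ∘ₗ x (bar h) ∘ₗ castLM V (hout h).symm)
    with hB
  have hL : symForm out inc bar hout hinc Ω V (lieAct out inc V a x) x
      = (∑ h : H, T h) - (∑ h : H, B h) := by
    rw [symForm, ← Finset.sum_sub_distrib]
    refine Finset.sum_congr rfl fun h _ => ?_
    simp only [lieAct, LinearMap.sub_comp, map_sub, mul_sub, hT, hB]
  have hBA : ∀ h, B (bar h) = - T h := by
    intro h
    rw [hB, hT]
    simp only
    rw [eps_bar h, neg_mul, neg_inj]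
    congr 1
    exact key V (hout h) (hinc h) (hout (bar h)) (hinc (bar h))
      (congrArg out (hinvol h)) (congrArg inc (hinvol h)) (x h) (x (bar h)) (a (inc h))
      (x (bar (bar h))) (castNat V out inc x (hinvol h)) (a (out (bar h))) (aNat V a (hout h))
  have hsum : ∑ h : H, B h = - ∑ h : H, T h := by
    rw [← Equiv.sum_comp (Function.Involutive.toPerm bar hinvol) B]
    have : ∀ h : H, B ((Function.Involutive.toPerm bar hinvol) h) = - T h := fun h => hBA h
    rw [Finset.sum_congr rfl fun h _ => this h, Finset.sum_neg_distrib]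
  have hR : ∑ i : I, LinearMap.trace ℂ (V i)
      (a i ∘ₗ psiMap out inc bar hout hinc Ω V x i) = ∑ h : H, T h := by
    have step : ∀ i : I, LinearMap.trace ℂ (V i)
        (a i ∘ₗ psiMap out inc bar hout hinc Ω V x i)
        = ∑ h : H, (if hh : inc h = i then
            epsSign Ω h * LinearMap.trace ℂ (V i)
              (a i ∘ₗ castLM V hh ∘ₗ
                (x h ∘ₗ castLM V (hinc h) ∘ₗ x (bar h) ∘ₗ castLM V (hout h).symm) ∘ₗ
                castLM V hh.symm)
          else 0) := by
      intro i
      rw [psiMap, comp_sum', map_sum]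
      refine Finset.sum_congr rfl fun h _ => ?_
      split
      · rw [LinearMap.comp_smul, map_smul, smul_eq_mul]
      · simp
    rw [Finset.sum_congr rfl fun i _ => step i, Finset.sum_comm]
    refine Finset.sum_congr rfl fun h _ => ?_
    rw [Fintype.sum_dite_eq]
    rw [hT]
    simp only [castLM_rfl, LinearMap.id_comp, LinearMap.comp_id, LinearMap.comp_assoc]
  rw [hL, hsum, hR]
  ring

end
end

section
/- Let x ∈ E_V be supported on Ω (i.e. x_h = 0 for h ∉ Ω) and y ∈ E_V be supported on Ω̄ (i.e. y_h = 0 for h ∈ Ω). Then ⟨a·x, y⟩ = 0 for all a ∈ ∏_{i∈I} End(V_i) if and only if ψ_i(x + y) = 0 for all i ∈ I. (In other words, y lies in the conormal space to the G_V-orbit of x precisely when the moment map vanishes at x + y.) -/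
/-!
STATEMENT 3: For x ∈ E_V supported on Ω and y ∈ E_V supported on Ω̄,
⟨a·x, y⟩ = 0 for all a ∈ ∏_i End(V_i)  ⟺  ψ_i(x + y) = 0 for all i ∈ I.
-/

noncomputable section

section helpers

variable {I : Type*} (V : I → Type*) [∀ i, AddCommGroup (V i)] [∀ i, Module ℂ (V i)]

@[simp] lemma castLM_self {i : I} (p : i = i) : castLM V p = LinearMap.id := rfl

@[simp] lemma castLM_comp {i j k : I} (p : i = j) (q : j = k) :
    castLM V q ∘ₗ castLM V p = castLM V (p.trans q) := by subst p; subst q; rfl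

@[simp] lemma castLM_comp' {W : Type*} [AddCommGroup W] [Module ℂ W]
    {i j k : I} (p : i = j) (q : j = k) (f : W →ₗ[ℂ] V i) :
    castLM V q ∘ₗ (castLM V p ∘ₗ f) = castLM V (p.trans q) ∘ₗ f := by
  subst p; subst q; rfl

lemma acast (a : ∀ i, V i →ₗ[ℂ] V i) {i j : I} (e : i = j) :
    castLM V e ∘ₗ a i = a j ∘ₗ castLM V e := by subst e; rfl

lemma trace_conj_cast {i j : I} (e : i = j) (f : V i →ₗ[ℂ] V i) :
    LinearMap.trace ℂ (V i) f =
      LinearMap.trace ℂ (V j) (castLM V e ∘ₗ f ∘ₗ castLM V e.symm) := by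
  subst e; rfl

lemma fcast {H : Type*} (out inc : H → I) (f : ∀ h, V (out h) →ₗ[ℂ] V (inc h))
    {h1 h2 : H} (e : h1 = h2) :
    f h1 = castLM V (congrArg inc e).symm ∘ₗ f h2 ∘ₗ castLM V (congrArg out e) := by
  subst e; rfl

lemma trace_forall_zero {W : Type*} [AddCommGroup W] [Module ℂ W] [FiniteDimensional ℂ W]
    (M : W →ₗ[ℂ] W) (h : ∀ b : W →ₗ[ℂ] W, LinearMap.trace ℂ W (b ∘ₗ M) = 0) : M = 0 := by
  let B := Module.finBasis ℂ W
  apply (LinearMap.toMatrix B B).injective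
  rw [map_zero]
  ext j i
  have := h (Matrix.toLin B B (Matrix.single i j 1))
  rw [LinearMap.trace_eq_matrix_trace ℂ B, LinearMap.toMatrix_comp B B B,
    LinearMap.toMatrix_toLin] at this
  simp only [Matrix.trace, Matrix.diag, Matrix.mul_apply, Matrix.single,
    Matrix.of_apply, ite_mul, one_mul, zero_mul] at this
  rw [Finset.sum_comm] at this
  simpa [Finset.sum_ite_eq', ite_and] using this

lemma compSum {α : Type*} {M N P : Type*} [AddCommGroup M] [Module ℂ M]
    [AddCommGroup N] [Module ℂ N] [AddCommGroup P] [Module ℂ P]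
    (f : N →ₗ[ℂ] P) (s : Finset α) (g : α → (M →ₗ[ℂ] N)) :
    f ∘ₗ (∑ h ∈ s, g h) = ∑ h ∈ s, f ∘ₗ g h := by
  ext v; simp

end helpers

lemma main_eq {I H : Type*} [Fintype I] [DecidableEq I] [Fintype H]
    (out inc : H → I) (bar : H → H)
    (hinvol : ∀ h, bar (bar h) = h)
    (hout : ∀ h, out (bar h) = inc h) (hinc : ∀ h, inc (bar h) = out h)
    (Ω : Set H) [DecidablePred (· ∈ Ω)]
    (hcover : ∀ h, h ∈ Ω ∨ bar h ∈ Ω) (hdisj : ∀ h, ¬(h ∈ Ω ∧ bar h ∈ Ω))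
    (V : I → Type*) [∀ i, AddCommGroup (V i)] [∀ i, Module ℂ (V i)]
    [∀ i, FiniteDimensional ℂ (V i)]
    (x y : ∀ h, V (out h) →ₗ[ℂ] V (inc h))
    (hx : ∀ h, h ∉ Ω → x h = 0) (hy : ∀ h, h ∈ Ω → y h = 0)
    (a : ∀ i, V i →ₗ[ℂ] V i) :
    symForm out inc bar hout hinc Ω V (lieAct out inc V a x) y =
      ∑ i, LinearMap.trace ℂ (V i)
        (a i ∘ₗ psiMap out inc bar hout hinc Ω V (x + y) i) := by
  classical
  have hbar : Function.Involutive bar := hinvol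
  have eps_bar : ∀ h, epsSign Ω (bar h) = -epsSign Ω h := by
    intro h
    rcases hcover h with hh | hh
    · have h2 : bar h ∉ Ω := fun hb => hdisj h ⟨hh, hb⟩
      simp [epsSign, hh, h2]
    · have h1 : h ∉ Ω := fun hb => hdisj h ⟨hb, hh⟩
      simp [epsSign, hh, h1]
  -- RHS computation
  have hRHS : (∑ i, LinearMap.trace ℂ (V i)
        (a i ∘ₗ psiMap out inc bar hout hinc Ω V (x + y) i))
      = ∑ h : H, epsSign Ω h * LinearMap.trace ℂ (V (inc h))
          (a (inc h) ∘ₗ ((x + y) h ∘ₗ castLM V (hinc h) ∘ₗ (x + y) (bar h) ∘ₗ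
            castLM V (hout h).symm)) := by
    have h1 : ∀ i, LinearMap.trace ℂ (V i)
        (a i ∘ₗ psiMap out inc bar hout hinc Ω V (x + y) i)
        = ∑ h : H, (if hh : inc h = i then
            epsSign Ω h * LinearMap.trace ℂ (V i)
              (a i ∘ₗ (castLM V hh ∘ₗ ((x + y) h ∘ₗ castLM V (hinc h) ∘ₗ
                (x + y) (bar h) ∘ₗ castLM V (hout h).symm) ∘ₗ castLM V hh.symm))
          else 0) := by
      intro i
      rw [psiMap, compSum, map_sum]
      refine Finset.sum_congr rfl fun h _ => ?_
      by_cases hh : inc h = i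
      · rw [dif_pos hh, dif_pos hh, LinearMap.comp_smul, map_smul, smul_eq_mul]
      · rw [dif_neg hh, dif_neg hh, LinearMap.comp_zero, map_zero]
    simp only [h1]
    rw [Finset.sum_comm]
    refine Finset.sum_congr rfl fun h _ => ?_
    rw [Fintype.sum_dite_eq]
    simp
  rw [hRHS]
  -- LHS computation
  set f1 : H → ℂ := fun h => epsSign Ω h * LinearMap.trace ℂ (V (inc h))
      ((a (inc h) ∘ₗ x h) ∘ₗ castLM V (hinc h) ∘ₗ y (bar h) ∘ₗ castLM V (hout h).symm)
    with hf1
  set f2 : H → ℂ := fun h => epsSign Ω h * LinearMap.trace ℂ (V (inc h))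
      ((x h ∘ₗ a (out h)) ∘ₗ castLM V (hinc h) ∘ₗ y (bar h) ∘ₗ castLM V (hout h).symm)
    with hf2
  have hLHS : symForm out inc bar hout hinc Ω V (lieAct out inc V a x) y
      = ∑ h : H, (f1 h - f2 h) := by
    rw [symForm]
    refine Finset.sum_congr rfl fun h _ => ?_
    simp only [hf1, hf2, lieAct, LinearMap.sub_comp, map_sub, mul_sub]
  rw [hLHS]
  have reindex : ∑ h : H, f2 h = ∑ h : H, f2 (bar h) :=
    (Equiv.sum_comp (hbar.toPerm bar) f2).symm
  rw [Finset.sum_sub_distrib, reindex, ← Finset.sum_sub_distrib]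
  refine Finset.sum_congr rfl fun h _ => ?_
  -- key transformation of f2 (bar h)
  have key : f2 (bar h) = -(epsSign Ω h * LinearMap.trace ℂ (V (inc h))
      (a (inc h) ∘ₗ castLM V (hout h) ∘ₗ castLM V (hinc (bar h)) ∘ₗ
        (castLM V (congrArg inc (hinvol h)).symm ∘ₗ y h ∘ₗ
          castLM V (congrArg out (hinvol h))) ∘ₗ
        castLM V (hout (bar h)).symm ∘ₗ x (bar h) ∘ₗ castLM V (hout h).symm)) := by
    rw [hf2]
    simp only
    rw [eps_bar h, fcast V out inc y (hinvol h), neg_mul, neg_inj]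
    rw [LinearMap.comp_assoc, LinearMap.trace_comp_comm', trace_conj_cast V (hout h)]
    congr 1
    simp only [← LinearMap.comp_assoc]
    rw [acast V a (hout h)]
  rw [key, sub_neg_eq_add, ← mul_add, ← map_add]
  congr 2
  simp only [Pi.add_apply, LinearMap.add_comp, LinearMap.comp_add, LinearMap.comp_assoc]
  by_cases hΩ : h ∈ Ω
  · have hyh : y h = 0 := hy h hΩ
    have hxb : x (bar h) = 0 := hx (bar h) fun hb => hdisj h ⟨hΩ, hb⟩
    simp only [hyh, hxb, LinearMap.zero_comp, LinearMap.comp_zero, add_zero, zero_add]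
  · have hxh : x h = 0 := hx h hΩ
    have hyb : y (bar h) = 0 := hy (bar h) ((hcover h).resolve_left hΩ)
    simp only [hxh, hyb, LinearMap.zero_comp, LinearMap.comp_zero, add_zero, zero_add]
    simp only [LinearMap.comp_assoc, castLM_comp, castLM_comp', castLM_self,
      LinearMap.id_comp, LinearMap.comp_id]


theorem stmt3 {I H : Type*} [Fintype I] [DecidableEq I] [Fintype H]
    (out inc : H → I) (bar : H → H)
    (hinvol : ∀ h, bar (bar h) = h) (hfpf : ∀ h, bar h ≠ h)
    (hout : ∀ h, out (bar h) = inc h) (hinc : ∀ h, inc (bar h) = out h)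
    (hnoloop : ∀ h, out h ≠ inc h)
    (Ω : Set H) [DecidablePred (· ∈ Ω)]
    (hcover : ∀ h, h ∈ Ω ∨ bar h ∈ Ω) (hdisj : ∀ h, ¬(h ∈ Ω ∧ bar h ∈ Ω))
    (V : I → Type*) [∀ i, AddCommGroup (V i)] [∀ i, Module ℂ (V i)]
    [∀ i, FiniteDimensional ℂ (V i)]
    (x y : ∀ h, V (out h) →ₗ[ℂ] V (inc h))
    (hx : ∀ h, h ∉ Ω → x h = 0) (hy : ∀ h, h ∈ Ω → y h = 0) :
    (∀ a : ∀ i, V i →ₗ[ℂ] V i,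
        symForm out inc bar hout hinc Ω V (lieAct out inc V a x) y = 0) ↔
      (∀ i, psiMap out inc bar hout hinc Ω V (x + y) i = 0) := by
  constructor
  · intro hall i
    apply trace_forall_zero
    intro b
    have hb := hall (fun j => if hji : i = j then castLM V hji ∘ₗ b ∘ₗ castLM V hji.symm else 0)
    rw [main_eq out inc bar hinvol hout hinc Ω hcover hdisj V x y hx hy] at hb
    have h2 : ∀ j, LinearMap.trace ℂ (V j)
        ((if hji : i = j then castLM V hji ∘ₗ b ∘ₗ castLM V hji.symm else 0) ∘ₗ
          psiMap out inc bar hout hinc Ω V (x + y) j)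
        = (if hji : i = j then LinearMap.trace ℂ (V j)
            ((castLM V hji ∘ₗ b ∘ₗ castLM V hji.symm) ∘ₗ
              psiMap out inc bar hout hinc Ω V (x + y) j) else 0) := by
      intro j; by_cases hji : i = j
      · rw [dif_pos hji, dif_pos hji]
      · rw [dif_neg hji, dif_neg hji, LinearMap.zero_comp, map_zero]
    simp only [h2] at hb
    rw [Fintype.sum_dite_eq] at hb
    simpa using hb
  · intro hpsi a
    rw [main_eq out inc bar hinvol hout hinc Ω hcover hdisj V x y hx hy]
    simp [hpsi]


end
end

section
/- Every nonzero indecomposable finite-dimensional representation (V, x) of the type A_n quiver (with arrows i → i−1) is isomorphic to (V(k,l), x(k,l)) for some 1 ≤ k ≤ l ≤ n. Here (V,x) is indecomposable means: whenever W = (W_i) and W' = (W'_i) are graded x-stable subspaces of V with V_i = W_i ⊕ W'_i for all i, one has W = 0 or W' = 0. -/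
/-!
Pick a nonzero path `x_{k+1} ∘ ⋯ ∘ x_d : V_d → V_k` of maximal length, a vector `v ∈ V_d`
with nonzero image and a functional `f` on `V_k` taking the value `1` there. The images of `v`
along the path span a subrepresentation `W`, and the kernels of the functionals
`g_i = f ∘ (path i → k)` form an `x`-stable complement `W'`: for `k ≤ i ≤ d` the functional `g_i`
is `1` on the generator of `W_i`, and outside `[k, d]` maximality makes `W_i = 0` and `g_i = 0`.
Since `v ≠ 0`, indecomposability forces `W' = 0`, so every `g_i` is injective, and the `g_i`
identify `(V, x)` with `(V(k,d), x(k,d))`.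
-/

noncomputable section

/-- The graded piece V(k,l)_i of the interval representation. -/
def VklA (k l i : ℤ) : Type := {r : ℤ // k ≤ r ∧ r ≤ l ∧ r = i} → ℂ

instance (k l i : ℤ) : AddCommGroup (VklA k l i) := by unfold VklA; infer_instance
instance (k l i : ℤ) : Module ℂ (VklA k l i) := by unfold VklA; infer_instance

/-- The map x(k,l)_i : V(k,l)_i → V(k,l)_{i-1}, sending e_r ↦ e_{r-1}
(with e_{k-1} = 0). -/
def xklA (k l i : ℤ) : VklA k l i →ₗ[ℂ] VklA k l (i - 1) where
  toFun v s :=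
    if h : s.1 + 1 ≤ l then
      v ⟨s.1 + 1, by obtain ⟨h1, h2, h3⟩ := s.2; omega, h,
        by obtain ⟨h1, h2, h3⟩ := s.2; omega⟩
    else 0
  map_add' a b := by
    funext s
    change (if h : s.1 + 1 ≤ l then (a + b) _ else 0) = (if h : s.1 + 1 ≤ l then a _ else 0) + (if h : s.1 + 1 ≤ l then b _ else 0)
    by_cases h : s.1 + 1 ≤ l
    · rw [dif_pos h, dif_pos h, dif_pos h]; rfl
    · rw [dif_neg h, dif_neg h, dif_neg h, add_zero]
  map_smul' c a := by
    funext s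
    change (if h : s.1 + 1 ≤ l then (c • a) _ else 0) = c • (if h : s.1 + 1 ≤ l then a _ else 0)
    by_cases h : s.1 + 1 ≤ l
    · rw [dif_pos h, dif_pos h]; rfl
    · rw [dif_neg h, dif_neg h, smul_zero]

theorem isCompl_span_singleton_ker_of_apply_eq_one {R M : Type*} [Ring R] [AddCommGroup M]
    [Module R M] {f : M →ₗ[R] R} {u : M} (hu : f u = 1) :
    IsCompl (R ∙ u) (LinearMap.ker f) := by
  refine ⟨Submodule.disjoint_def.mpr fun w hw hw' => ?_, codisjoint_iff.mpr (eq_top_iff.mpr ?_)⟩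
  · obtain ⟨c, rfl⟩ := Submodule.mem_span_singleton.mp hw
    rw [LinearMap.mem_ker, map_smul, hu, smul_eq_mul, mul_one] at hw'
    rw [hw', zero_smul]
  · intro w _
    rw [← add_sub_cancel (f w • u) w]
    exact Submodule.add_mem_sup (Submodule.mem_span_singleton.mpr ⟨_, rfl⟩) (by simp [hu])

section PathMap

variable {R : Type*} [Semiring R] {V : ℤ → Type*} [∀ i, AddCommMonoid (V i)]
  [∀ i, Module R (V i)] (x : ∀ i, V i →ₗ[R] V (i - 1))

/-- The composite `x_{j+1} ∘ ⋯ ∘ x_i : V i → V j` of the arrows from `i` down to `j`,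
and `0` when `i < j`. -/
def pathMap (i j : ℤ) : V i →ₗ[R] V j :=
  Int.inductionOn' (motive := fun j => V i →ₗ[R] V j) j i LinearMap.id (fun _ _ _ => 0)
    fun j _ f => x j ∘ₗ f

@[simp] theorem pathMap_self (i : ℤ) : pathMap x i i = LinearMap.id := Int.inductionOn'_self

theorem pathMap_sub_one {i j : ℤ} (h : j ≤ i) : pathMap x i (j - 1) = x j ∘ₗ pathMap x i j :=
  Int.inductionOn'_sub_one h

theorem pathMap_of_lt {i j : ℤ} (h : i < j) : pathMap x i j = 0 := by
  obtain ⟨j, rfl⟩ : ∃ j', j = j' + 1 := ⟨j - 1, by omega⟩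
  exact Int.inductionOn'_add_one (by omega)

theorem pathMap_comp {i j k : ℤ} (hkj : k ≤ j) (hji : j ≤ i) :
    pathMap x j k ∘ₗ pathMap x i j = pathMap x i k := by
  induction k, hkj using Int.leInductionDown with
  | base => simp
  | pred k hkj ih => rw [pathMap_sub_one x hkj, pathMap_sub_one x (hkj.trans hji), ← ih]; rfl

theorem pathMap_pathMap {i j k : ℤ} (hkj : k ≤ j) (hji : j ≤ i) (w : V i) :
    pathMap x j k (pathMap x i j w) = pathMap x i k w :=
  LinearMap.congr_fun (pathMap_comp x hkj hji) w

theorem pathMap_comp_x {i k : ℤ} (h : k ≤ i - 1) :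
    pathMap x (i - 1) k ∘ₗ x i = pathMap x i k := by
  rw [← pathMap_comp x (i := i) h (by omega), pathMap_sub_one x le_rfl, pathMap_self,
    LinearMap.comp_id]

theorem exists_maximal_nonzero_pathMap (s : Finset ℤ)
    (hs : ∀ i ∉ s, Subsingleton (V i)) (hV : ∃ i, Nontrivial (V i)) :
    ∃ d ∈ s, ∃ k ∈ s, k ≤ d ∧ pathMap x d k ≠ 0 ∧
      ∀ i j, d - k < i - j → pathMap x i j = 0 := by
  classical
  set P := (s ×ˢ s).filter fun p => pathMap x p.1 p.2 ≠ 0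
  have hP : P.Nonempty := by
    obtain ⟨i, hi⟩ := hV
    have his : i ∈ s := by_contra fun h => not_subsingleton _ (hs i h)
    have hid : (LinearMap.id : V i →ₗ[R] V i) ≠ 0 :=
      LinearMap.ne_zero_of_injective Function.injective_id
    exact ⟨(i, i), by simpa [P, his] using hid⟩
  obtain ⟨⟨d, k⟩, hdk, hmax⟩ := P.exists_max_image (fun p => p.1 - p.2) hP
  simp only [P, Finset.mem_filter, Finset.mem_product] at hdk hmax
  refine ⟨d, hdk.1.1, k, hdk.1.2, not_lt.mp fun h => hdk.2 (pathMap_of_lt x h), hdk.2,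
    fun i j hij => by_contra fun h => ?_⟩
  by_cases hi : i ∈ s
  · by_cases hj : j ∈ s
    · exact (hmax (i, j) ⟨⟨hi, hj⟩, h⟩).not_gt hij
    · have := hs j hj
      exact h (Subsingleton.elim _ _)
  · have := hs i hi
    exact h (Subsingleton.elim _ _)

end PathMap

section Decomposition

variable {R : Type*} [Ring R] {V : ℤ → Type*} [∀ i, AddCommGroup (V i)] [∀ i, Module R (V i)]
  (x : ∀ i, V i →ₗ[R] V (i - 1)) {d k : ℤ}

theorem apply_mem_span_pathMap (v : V d) (i : ℤ) :
    ∀ w ∈ R ∙ pathMap x d i v, x i w ∈ R ∙ pathMap x d (i - 1) v := by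
  intro w hw
  obtain ⟨c, rfl⟩ := Submodule.mem_span_singleton.mp hw
  rw [map_smul]
  refine Submodule.smul_mem _ _ ?_
  rcases le_or_gt i d with h | h
  · rw [pathMap_sub_one x h]
    exact Submodule.mem_span_singleton_self _
  · simp [pathMap_of_lt x h]

theorem apply_mem_ker_pathMap (f : V k →ₗ[R] R) (i : ℤ) :
    ∀ w ∈ LinearMap.ker (f ∘ₗ pathMap x i k),
      x i w ∈ LinearMap.ker (f ∘ₗ pathMap x (i - 1) k) := by
  intro w hw
  rcases le_or_gt k (i - 1) with h | h
  · rw [← pathMap_comp_x x h] at hw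
    simpa using hw
  · simp [pathMap_of_lt x h]

variable {x}

theorem pathMap_eq_zero_of_notMem_Icc (hmax : ∀ i j, d - k < i - j → pathMap x i j = 0)
    {i : ℤ} (hi : i ∉ Set.Icc k d) : pathMap x d i = 0 ∧ pathMap x i k = 0 := by
  rcases not_and_or.mp hi with h | h
  · exact ⟨hmax d i (by omega), pathMap_of_lt x (by omega)⟩
  · exact ⟨pathMap_of_lt x (by omega), hmax i k (by omega)⟩

theorem isCompl_span_pathMap_ker (hmax : ∀ i j, d - k < i - j → pathMap x i j = 0) {v : V d}
    {f : V k →ₗ[R] R} (hf : f (pathMap x d k v) = 1) (i : ℤ) :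
    IsCompl (R ∙ pathMap x d i v) (LinearMap.ker (f ∘ₗ pathMap x i k)) := by
  by_cases hi : i ∈ Set.Icc k d
  · apply isCompl_span_singleton_ker_of_apply_eq_one
    rwa [LinearMap.comp_apply, pathMap_pathMap x hi.1 hi.2]
  · obtain ⟨h1, h2⟩ := pathMap_eq_zero_of_notMem_Icc hmax hi
    simpa [h1, h2] using isCompl_bot_top

end Decomposition

section IntervalRep

variable {V : ℤ → Type*} [∀ i, AddCommGroup (V i)] [∀ i, Module ℂ (V i)]

/-- `w ↦ g w • e_i`. -/
def toVklA (k l : ℤ) {i : ℤ} (g : V i →ₗ[ℂ] ℂ) : V i →ₗ[ℂ] VklA k l i := LinearMap.pi fun _ => g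

@[simp] theorem toVklA_apply (k l : ℤ) {i : ℤ} (g : V i →ₗ[ℂ] ℂ) (w : V i) (s) :
    toVklA k l g w s = g w := rfl

theorem bijective_toVklA {k l i : ℤ} {g : V i →ₗ[ℂ] ℂ} (hg : Function.Injective g)
    (hone : i ∈ Set.Icc k l → ∃ u, g u = 1) (hzero : i ∉ Set.Icc k l → g = 0) :
    Function.Bijective (toVklA k l g) := by
  refine ⟨fun w w' h => hg ?_, fun F => ?_⟩
  · by_cases hi : i ∈ Set.Icc k l
    · simpa using congr_fun h ⟨i, hi.1, hi.2, rfl⟩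
    · simp [hzero hi]
  · by_cases hi : i ∈ Set.Icc k l
    · obtain ⟨u, hu⟩ := hone hi
      refine ⟨F ⟨i, hi.1, hi.2, rfl⟩ • u, funext fun s => ?_⟩
      obtain ⟨r, hr⟩ := s
      obtain rfl : r = i := hr.2.2
      simp [hu]
    · exact ⟨0, funext fun ⟨r, hr⟩ => absurd ⟨hr.2.2 ▸ hr.1, hr.2.2 ▸ hr.2.1⟩ hi⟩

theorem exists_linearEquiv_VklA {k l : ℤ} (x : ∀ i, V i →ₗ[ℂ] V (i - 1)) (g : ∀ i, V i →ₗ[ℂ] ℂ)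
    (hg : ∀ i, Function.Injective (g i)) (hone : ∀ i ∈ Set.Icc k l, ∃ u, g i u = 1)
    (hzero : ∀ i ∉ Set.Icc k l, g i = 0) (hx : ∀ i, k ≤ i - 1 → g (i - 1) ∘ₗ x i = g i) :
    ∃ φ : ∀ i, V i ≃ₗ[ℂ] VklA k l i, ∀ i w, φ (i - 1) (x i w) = xklA k l i (φ i w) := by
  refine ⟨fun i => LinearEquiv.ofBijective _ (bijective_toVklA (hg i) (hone i) (hzero i)),
    fun i w => funext fun ⟨r, hr⟩ => ?_⟩
  change g (i - 1) (x i w) = if _ : r + 1 ≤ l then g i w else 0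
  rw [← LinearMap.comp_apply, hx i (by omega)]
  split_ifs with h
  · rfl
  · rw [hzero i fun hi => h (by have := hi.2; omega), LinearMap.zero_apply]

end IntervalRep

theorem stmt6_general (n : ℤ)
    -- a finite-dimensional representation of the A_n quiver, graded by
    -- I = {1,…,n} (the spaces V_i for i outside {1,…,n} are zero)
    (V : ℤ → Type*) [∀ i, AddCommGroup (V i)] [∀ i, Module ℂ (V i)]
    (hsupp : ∀ i : ℤ, i < 1 ∨ n < i → Subsingleton (V i))
    (x : ∀ i : ℤ, V i →ₗ[ℂ] V (i - 1))
    -- nonzero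
    (hnonzero : ∃ i : ℤ, Nontrivial (V i))
    -- indecomposable
    (hindec : ∀ W W' : ∀ i : ℤ, Submodule ℂ (V i),
      (∀ i : ℤ, 2 ≤ i → i ≤ n → ∀ v ∈ W i, x i v ∈ W (i - 1)) →
      (∀ i : ℤ, 2 ≤ i → i ≤ n → ∀ v ∈ W' i, x i v ∈ W' (i - 1)) →
      (∀ i : ℤ, IsCompl (W i) (W' i)) →
      (∀ i : ℤ, W i = ⊥) ∨ (∀ i : ℤ, W' i = ⊥)) :
    -- conclusion: (V,x) ≅ (V(k,l), x(k,l)) for some 1 ≤ k ≤ l ≤ n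
    ∃ (k l : ℤ), 1 ≤ k ∧ k ≤ l ∧ l ≤ n ∧
      ∃ φ : ∀ i : ℤ, V i ≃ₗ[ℂ] VklA k l i,
        ∀ i : ℤ, 2 ≤ i → i ≤ n → ∀ v : V i,
          φ (i - 1) (x i v) = xklA k l i (φ i v) := by
  obtain ⟨d, hd, k, hk, hkd, hdk, hmax⟩ := exists_maximal_nonzero_pathMap x
    (Finset.Icc 1 n) (fun i hi => hsupp i (by rw [Finset.mem_Icc] at hi; omega)) hnonzero
  obtain ⟨v, hv⟩ : ∃ v, pathMap x d k v ≠ 0 := not_forall.mp fun h => hdk (LinearMap.ext h)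
  obtain ⟨f, hf⟩ := Module.Projective.exists_dual_eq_one ℂ hv
  obtain hW | hW' := hindec _ _ (fun i _ _ => apply_mem_span_pathMap x v i)
    (fun i _ _ => apply_mem_ker_pathMap x f i) (isCompl_span_pathMap_ker hmax hf)
  · have hv0 : v = 0 := by simpa using hW d
    simp [hv0] at hv
  rw [Finset.mem_Icc] at hd hk
  obtain ⟨φ, hφ⟩ := exists_linearEquiv_VklA x (fun i => f ∘ₗ pathMap x i k)
    (fun i => LinearMap.ker_eq_bot.mp (hW' i))
    (fun i hi => ⟨pathMap x d i v, by rw [LinearMap.comp_apply, pathMap_pathMap x hi.1 hi.2, hf]⟩)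
    (fun i hi => by simp [(pathMap_eq_zero_of_notMem_Icc hmax hi).2])
    (fun i hi => by rw [LinearMap.comp_assoc, pathMap_comp_x x hi])
  exact ⟨k, d, hk.1, hkd, hd.2, φ, fun i _ _ => hφ i⟩

theorem stmt6 (n : ℤ) (hn : 1 ≤ n)
    -- a finite-dimensional representation of the A_n quiver, graded by
    -- I = {1,…,n} (the spaces V_i for i outside {1,…,n} are zero)
    (V : ℤ → Type*) [∀ i, AddCommGroup (V i)] [∀ i, Module ℂ (V i)]
    [∀ i, FiniteDimensional ℂ (V i)]
    (hsupp : ∀ i : ℤ, i < 1 ∨ n < i → Subsingleton (V i))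
    (x : ∀ i : ℤ, V i →ₗ[ℂ] V (i - 1))
    -- nonzero
    (hnonzero : ∃ i : ℤ, Nontrivial (V i))
    -- indecomposable
    (hindec : ∀ W W' : ∀ i : ℤ, Submodule ℂ (V i),
      (∀ i : ℤ, 2 ≤ i → i ≤ n → ∀ v ∈ W i, x i v ∈ W (i - 1)) →
      (∀ i : ℤ, 2 ≤ i → i ≤ n → ∀ v ∈ W' i, x i v ∈ W' (i - 1)) →
      (∀ i : ℤ, IsCompl (W i) (W' i)) →
      (∀ i : ℤ, W i = ⊥) ∨ (∀ i : ℤ, W' i = ⊥)) :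
    -- conclusion: (V,x) ≅ (V(k,l), x(k,l)) for some 1 ≤ k ≤ l ≤ n
    ∃ (k l : ℤ), 1 ≤ k ∧ k ≤ l ∧ l ≤ n ∧
      ∃ φ : ∀ i : ℤ, V i ≃ₗ[ℂ] VklA k l i,
        ∀ i : ℤ, 2 ≤ i → i ≤ n → ∀ v : V i,
          φ (i - 1) (x i v) = xklA k l i (φ i v) :=
  stmt6_general n V hsupp x hnonzero hindec

end
end

section
/- For the doubled type A_n quiver, every element of the variety Λ_V is automatically nilpotent: if x ∈ E_V satisfies ψ_i(x) = 0 for all i ∈ I, then x is nilpotent. -/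
/-!
STATEMENT 9: For the doubled type A_n quiver, every element of Λ_V is
automatically nilpotent: if x ∈ E_V satisfies ψ_i(x) = 0 for all i, then x is
nilpotent.

An element x ∈ E_V of the doubled quiver is encoded by its components along the
orientation Ω (the maps d i : V i → V (i-1), for the arrows h_{i,i-1}) and the
components along Ω̄ (the maps u i : V i → V (i+1), for the arrows h_{i,i+1});
the vertex set {1,…,n} is embedded in ℤ, all spaces V_i for i outside
{1,…,n} being zero, so that precisely the arrows of the type A_n graph carry
nonzero information.
-/

noncomputable section

/-- The end vertex of a path: each letter `true` follows an arrow i → i−1 of Ω,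
each letter `false` an arrow i → i+1 of Ω̄. -/
def pathEnd : List Bool → ℤ → ℤ
  | [], i => i
  | true :: w, i => pathEnd w (i - 1)
  | false :: w, i => pathEnd w (i + 1)

/-- The composition x_{h_1} ∘ ⋯ ∘ x_{h_N} along a path of consecutive arrows
(read right to left), starting at vertex i. -/
def pathComp (V : ℤ → Type*) [∀ i, AddCommGroup (V i)] [∀ i, Module ℂ (V i)]
    (d : ∀ i : ℤ, V i →ₗ[ℂ] V (i - 1)) (u : ∀ i : ℤ, V i →ₗ[ℂ] V (i + 1)) :
    (w : List Bool) → (i : ℤ) → (V i →ₗ[ℂ] V (pathEnd w i))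
  | [], _ => LinearMap.id
  | true :: w, i => pathComp V d u w (i - 1) ∘ₗ d i
  | false :: w, i => pathComp V d u w (i + 1) ∘ₗ u i

/-!
The relation ψ_i(x) = 0 says that the arrows `d` and `u` commute at every vertex. Hence the
kernel of the composite along a path depends only on how many letters of each kind the path has,
so every path may be reordered as a run of one letter followed by the others. A path of length
2n has at least n letters of one kind, and a straight run of n steps starts or ends outside
{1,…,n}, where V vanishes.
-/

section PathComp

variable {V : ℤ → Type*} [∀ i, AddCommGroup (V i)] [∀ i, Module ℂ (V i)]
  (d : ∀ i : ℤ, V i →ₗ[ℂ] V (i - 1)) (u : ∀ i : ℤ, V i →ₗ[ℂ] V (i + 1))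

lemma pathEnd_replicate (k : ℕ) (c : Bool) (i : ℤ) :
    pathEnd (List.replicate k c) i = if c then i - k else i + k := by
  induction k generalizing i with
  | zero => cases c <;> simp [pathEnd]
  | succ k ih => cases c <;> simp only [List.replicate_succ, pathEnd, ih] <;> push_cast <;> ring

lemma pathComp_replicate_eq_zero {n : ℤ} (hsupp : ∀ i : ℤ, i < 1 ∨ n < i → Subsingleton (V i))
    {k : ℕ} (hk : n.toNat ≤ k) (c : Bool) (i : ℤ) :
    pathComp V d u (List.replicate k c) i = 0 := by
  by_cases hi : i < 1 ∨ n < i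
  · have := hsupp i hi
    exact Subsingleton.elim _ _
  · have := hsupp (pathEnd (List.replicate k c) i) (by rw [pathEnd_replicate]; split <;> omega)
    exact Subsingleton.elim _ _

lemma ker_pathComp_le_ker_pathComp_append (w v : List Bool) (i : ℤ) :
    LinearMap.ker (pathComp V d u w i) ≤ LinearMap.ker (pathComp V d u (w ++ v) i) := by
  induction w generalizing i with
  | nil => rintro x (rfl : x = 0); exact zero_mem _
  | cons c w ih =>
    cases c <;> exact Submodule.comap_mono (ih _)

lemma pathComp_append_eq_zero_of_left {w : List Bool} {i : ℤ} (h : pathComp V d u w i = 0)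
    (v : List Bool) : pathComp V d u (w ++ v) i = 0 := by
  rw [← LinearMap.ker_eq_top, eq_top_iff, ← LinearMap.ker_eq_top.mpr h]
  exact ker_pathComp_le_ker_pathComp_append d u w v i

lemma ker_pathComp_castLM_comp {W : Type*} [AddCommGroup W] [Module ℂ W] (w : List Bool)
    {a b : ℤ} (h : a = b) (f : W →ₗ[ℂ] V a) :
    LinearMap.ker (pathComp V d u w b ∘ₗ castLM V h ∘ₗ f) =
      LinearMap.ker (pathComp V d u w a ∘ₗ f) := by
  subst h; rfl

lemma ker_pathComp_false_true (v : List Bool) (j : ℤ)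
    (hj : castLM V (show j + 1 - 1 = j by ring) ∘ₗ d (j + 1) ∘ₗ u j =
      castLM V (show j - 1 + 1 = j by ring) ∘ₗ u (j - 1) ∘ₗ d j) :
    LinearMap.ker (pathComp V d u (false :: true :: v) j) =
      LinearMap.ker (pathComp V d u (true :: false :: v) j) :=
  calc LinearMap.ker (pathComp V d u v (j + 1 - 1) ∘ₗ d (j + 1) ∘ₗ u j)
      = LinearMap.ker (pathComp V d u v j ∘ₗ castLM V _ ∘ₗ d (j + 1) ∘ₗ u j) :=
        (ker_pathComp_castLM_comp d u v _ _).symm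
    _ = LinearMap.ker (pathComp V d u v j ∘ₗ castLM V _ ∘ₗ u (j - 1) ∘ₗ d j) := by rw [hj]
    _ = LinearMap.ker (pathComp V d u v (j - 1 + 1) ∘ₗ u (j - 1) ∘ₗ d j) :=
        ker_pathComp_castLM_comp d u v _ _

lemma ker_pathComp_eq_of_perm
    (hpsi : ∀ i : ℤ,
      castLM V (show i + 1 - 1 = i by ring) ∘ₗ d (i + 1) ∘ₗ u i -
        castLM V (show i - 1 + 1 = i by ring) ∘ₗ u (i - 1) ∘ₗ d i = 0)
    {w w' : List Bool} (h : w.Perm w') (i : ℤ) :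
    LinearMap.ker (pathComp V d u w i) = LinearMap.ker (pathComp V d u w' i) := by
  induction h generalizing i with
  | nil => rfl
  | cons c _ ih => cases c <;> exact congrArg (Submodule.comap _) (ih _)
  | swap x y v =>
    cases x <;> cases y
    · rfl
    · exact (ker_pathComp_false_true d u v i (sub_eq_zero.mp (hpsi i))).symm
    · exact ker_pathComp_false_true d u v i (sub_eq_zero.mp (hpsi i))
    · rfl
  | trans _ _ ih₁ ih₂ => exact (ih₁ i).trans (ih₂ i)

end PathComp

lemma List.perm_replicate_count_append_replicate_count_not (w : List Bool) (c : Bool) :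
    w.Perm (List.replicate (w.count c) c ++ List.replicate (w.count (!c)) (!c)) := by
  rw [List.perm_iff_count]
  intro a
  cases a <;> cases c <;> simp [List.count_replicate]

theorem stmt9 (n : ℤ) (hn : 1 ≤ n)
    (V : ℤ → Type*) [∀ i, AddCommGroup (V i)] [∀ i, Module ℂ (V i)]
    (hsupp : ∀ i : ℤ, i < 1 ∨ n < i → Subsingleton (V i))
    (d : ∀ i : ℤ, V i →ₗ[ℂ] V (i - 1)) (u : ∀ i : ℤ, V i →ₗ[ℂ] V (i + 1))
    -- ψ_i(x) = x_{h_{i+1,i}} ∘ x_{h_{i,i+1}} − x_{h_{i-1,i}} ∘ x_{h_{i,i-1}} = 0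
    (hpsi : ∀ i : ℤ,
      castLM V (show i + 1 - 1 = i by ring) ∘ₗ d (i + 1) ∘ₗ u i -
        castLM V (show i - 1 + 1 = i by ring) ∘ₗ u (i - 1) ∘ₗ d i = 0) :
    -- x is nilpotent
    ∃ N : ℕ, 1 ≤ N ∧ ∀ w : List Bool, w.length = N → ∀ i : ℤ,
      pathComp V d u w i = 0 := by
  refine ⟨2 * n.toNat, by omega, fun w hw i => ?_⟩
  obtain ⟨c, hc⟩ : ∃ c, n.toNat ≤ w.count c := by
    have := List.count_true_add_count_false w
    by_cases h : n.toNat ≤ w.count true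
    exacts [⟨true, h⟩, ⟨false, by omega⟩]
  rw [← LinearMap.ker_eq_top, ker_pathComp_eq_of_perm d u hpsi
    (w.perm_replicate_count_append_replicate_count_not c), LinearMap.ker_eq_top]
  exact pathComp_append_eq_zero_of_left d u (pathComp_replicate_eq_zero d u hsupp hc c i) _
end
end

section
/- Every nonzero indecomposable finite-dimensional nilpotent representation (V, x) of the cyclic quiver of type A_n^{(1)} is isomorphic to (V(k,l), x(k,l)) for some integers k ≤ l, and the pair (k,l) is unique up to simultaneous translation by a multiple of n+1: if (V,x) ≅ (V(k,l), x(k,l)) and (V,x) ≅ (V(k',l'), x(k',l')), then there is m ∈ ℤ with k' = k + m(n+1) and l' = l + m(n+1). -/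
/-!
Assemble the spaces `V i` into one endomorphism `X` of `Π i, V i` that lowers degrees by one; it
is nilpotent. If `N` is its nilpotency index, some homogeneous `v` has `X ^ (N - 1) v ≠ 0`, so the
string `v, X v, …, X ^ (N - 1) v` is linearly independent, and there is a functional `f`,
supported in the degree of `X ^ (N - 1) v`, which is `1` there and kills the rest of the string.
The span of the string and `⋂ j, ker (f ∘ X ^ j)` are then complementary, graded and `X`-stable,
so by indecomposability the string is a homogeneous basis; read degreewise, it is the standard
basis of `V(k,l)` with `l - k = N - 1`.

For uniqueness, `l - k + 1` is the total dimension, and `k mod (n + 1)` is the only degree in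
which `x` has a nonzero kernel.
-/

noncomputable section

/-- The graded piece V(k,l)_i of the interval representation of the cyclic
quiver with vertex set ℤ/(n+1)ℤ. -/
def VklC (n : ℕ) (k l : ℤ) (i : ZMod (n + 1)) : Type :=
  {r : ℤ // k ≤ r ∧ r ≤ l ∧ (r : ZMod (n + 1)) = i} → ℂ

instance (n : ℕ) (k l : ℤ) (i : ZMod (n + 1)) : AddCommGroup (VklC n k l i) := by
  unfold VklC; infer_instance
instance (n : ℕ) (k l : ℤ) (i : ZMod (n + 1)) : Module ℂ (VklC n k l i) := by
  unfold VklC; infer_instance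

/-- The map x(k,l)_i : V(k,l)_i → V(k,l)_{i-1}, sending e_r ↦ e_{r-1}
(with e_{k-1} = 0). -/
def xklC (n : ℕ) (k l : ℤ) (i : ZMod (n + 1)) :
    VklC n k l i →ₗ[ℂ] VklC n k l (i - 1) where
  toFun v s :=
    if h : s.1 + 1 ≤ l then
      v ⟨s.1 + 1, by obtain ⟨h1, h2, h3⟩ := s.2; omega, h,
        by obtain ⟨h1, h2, h3⟩ := s.2; push_cast; rw [h3]; ring⟩
    else 0
  map_add' a b := by
    funext s; erw [Pi.add_apply]; by_cases h : s.1 + 1 ≤ l <;> simp [h] <;> rfl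
  map_smul' c a := by
    funext s; erw [Pi.smul_apply]; by_cases h : s.1 + 1 ≤ l <;> simp [h] <;> rfl

/-- Composition of N consecutive maps of a representation of the cyclic quiver,
starting at vertex i. -/
def compN (n : ℕ) (V : ZMod (n + 1) → Type*)
    [∀ i, AddCommGroup (V i)] [∀ i, Module ℂ (V i)]
    (x : ∀ i, V i →ₗ[ℂ] V (i - 1)) :
    (N : ℕ) → (i : ZMod (n + 1)) → (V i →ₗ[ℂ] V (i - (N : ZMod (n + 1))))
  | 0, i => castLM V (by simp)
  | (N + 1), i =>
      castLM V (show i - 1 - (N : ZMod (n + 1)) = i - ((N + 1 : ℕ) : ZMod (n + 1)) by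
        push_cast; ring) ∘ₗ compN n V x N (i - 1) ∘ₗ x i

/-- `IsoToVklC` says the representation (V, x) of the cyclic quiver is
isomorphic to (V(k,l), x(k,l)). -/
def IsoToVklC (n : ℕ) (V : ZMod (n + 1) → Type*)
    [∀ i, AddCommGroup (V i)] [∀ i, Module ℂ (V i)]
    (x : ∀ i, V i →ₗ[ℂ] V (i - 1)) (k l : ℤ) : Prop :=
  ∃ φ : ∀ i : ZMod (n + 1), V i ≃ₗ[ℂ] VklC n k l i,
    ∀ (i : ZMod (n + 1)) (v : V i), φ (i - 1) (x i v) = xklC n k l i (φ i v)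

abbrev VklIdx (n : ℕ) (k l : ℤ) (i : ZMod (n + 1)) : Type :=
  {r : ℤ // k ≤ r ∧ r ≤ l ∧ (r : ZMod (n + 1)) = i}

instance (n : ℕ) (k l : ℤ) (i : ZMod (n + 1)) : Fintype (VklIdx n k l i) :=
  Fintype.ofFinset ((Finset.Icc k l).filter fun r => (r : ZMod (n + 1)) = i)
    (fun r => by simp [and_assoc]; rfl)

section IntervalRepresentation

variable {n : ℕ} {k l : ℤ} {i : ZMod (n + 1)} {V : ZMod (n + 1) → Type*}
  [∀ i, AddCommGroup (V i)] [∀ i, Module ℂ (V i)] {x : ∀ i, V i →ₗ[ℂ] V (i - 1)}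

@[simp]
theorem VklC.zero_apply (s : VklIdx n k l i) : (0 : VklC n k l i) s = 0 :=
  rfl

theorem xklC_apply (f : VklC n k l i) (s : VklIdx n k l (i - 1)) :
    xklC n k l i f s = if h : s.1 + 1 ≤ l then
      f ⟨s.1 + 1, by have := s.2; omega, h, by have := s.2.2.2; push_cast; rw [this]; ring⟩
    else 0 :=
  rfl

theorem xklC_apply_basis {E : Type*} [AddCommGroup E] [Module ℂ E]
    (b : Module.Basis (VklIdx n k l i) ℂ E) (r : VklIdx n k l i) (s : VklIdx n k l (i - 1)) :
    xklC n k l i (b.equivFun (b r)) s = if s.1 + 1 = r.1 then 1 else 0 := by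
  have hr := r.2
  refine (xklC_apply _ s).trans ?_
  split_ifs with hs h h
  · simp [h]
  · simp [Subtype.ext_iff, Ne.symm h]
  · omega
  · rfl

theorem isoToVklC_of_basis (b : ∀ i, Module.Basis (VklIdx n k l i) ℂ (V i))
    (hsucc : ∀ i (r : VklIdx n k l i) (r' : VklIdx n k l (i - 1)),
      r'.1 + 1 = r.1 → x i (b i r) = b (i - 1) r')
    (hbot : ∀ i (r : VklIdx n k l i), r.1 = k → x i (b i r) = 0) :
    IsoToVklC n V x k l := by
  let φ : ∀ i, V i ≃ₗ[ℂ] VklC n k l i := fun i => (b i).equivFun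
  refine ⟨φ, fun i => LinearMap.congr_fun (?_ : (φ (i - 1)).toLinearMap ∘ₗ x i =
    xklC n k l i ∘ₗ (φ i).toLinearMap)⟩
  refine (b i).ext fun r => funext fun s => ?_
  change (b (i - 1)).equivFun (x i (b i r)) s = xklC n k l i ((b i).equivFun (b i r)) s
  rw [xklC_apply_basis]
  have hr := r.2
  have hs := s.2
  by_cases hrk : r.1 = k
  · rw [hbot i r hrk, if_neg (by omega), map_zero]
    rfl
  · obtain ⟨r', hr'⟩ : ∃ r' : VklIdx n k l (i - 1), r'.1 + 1 = r.1 :=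
      ⟨⟨r.1 - 1, by omega, by omega, by push_cast; rw [hr.2.2]⟩, by simp⟩
    rw [hsucc i r r' hr', Module.Basis.equivFun_self]
    simp only [Subtype.ext_iff]
    congr 1
    exact propext (by omega)

theorem finrank_VklC : Module.finrank ℂ (VklC n k l i) = Fintype.card (VklIdx n k l i) :=
  Module.finrank_pi ℂ

theorem sum_card_VklIdx : ∑ i, Fintype.card (VklIdx n k l i) = (l + 1 - k).toNat := by
  have hcard : ∀ i, Fintype.card (VklIdx n k l i) =
      ((Finset.Icc k l).filter fun r : ℤ => (r : ZMod (n + 1)) = i).card := fun i =>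
    Fintype.card_of_subtype _ (by simp [and_assoc])
  simp_rw [hcard]
  rw [← Finset.card_eq_sum_card_fiberwise (fun r _ => Finset.mem_univ _), Int.card_Icc]

theorem intCast_eq_of_xklC_eq_zero {f : VklC n k l i} (hf : f ≠ 0) (hxf : xklC n k l i f = 0) :
    (k : ZMod (n + 1)) = i := by
  obtain ⟨s, hs⟩ := Function.ne_iff.mp hf
  have hs' := s.2
  by_cases hsk : s.1 = k
  · rw [← hsk, hs'.2.2]
  · -- otherwise `f s` would survive as a coefficient of `xklC f` at `s - 1`
    have hmem : k ≤ s.1 - 1 ∧ s.1 - 1 ≤ l ∧ ((s.1 - 1 : ℤ) : ZMod (n + 1)) = i - 1 :=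
      ⟨by omega, by omega, by push_cast; rw [hs'.2.2]⟩
    have := congrFun hxf ⟨s.1 - 1, hmem⟩
    rw [xklC_apply, dif_pos (by simp; omega)] at this
    exact (hs (by simpa using this)).elim

theorem exists_xklC_eq_zero (hkl : k ≤ l) :
    ∃ f : VklC n k l k, f ≠ 0 ∧ xklC n k l k f = 0 := by
  let f : VklC n k l k := Pi.single ⟨k, le_rfl, hkl, rfl⟩ 1
  refine ⟨f, fun h => by simpa [f] using congrFun h ⟨k, le_rfl, hkl, rfl⟩, funext fun s => ?_⟩
  have hs := s.2
  refine (xklC_apply f s).trans ?_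
  split_ifs
  · exact Pi.single_eq_of_ne (fun h => by simp [Subtype.ext_iff] at h; omega) _
  · rfl

namespace IsoToVklC

theorem sum_finrank (h : IsoToVklC n V x k l) :
    ∑ i, Module.finrank ℂ (V i) = (l + 1 - k).toNat := by
  obtain ⟨φ, -⟩ := h
  simp_rw [(φ _).finrank_eq, finrank_VklC, sum_card_VklIdx]

theorem exists_ne_zero_x_eq_zero (h : IsoToVklC n V x k l) (hkl : k ≤ l) :
    ∃ u : V k, u ≠ 0 ∧ x k u = 0 := by
  obtain ⟨φ, hφ⟩ := h
  obtain ⟨f, hf, hxf⟩ := exists_xklC_eq_zero (n := n) hkl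
  refine ⟨(φ k).symm f, by simpa using hf, (φ (k - 1)).map_eq_zero_iff.mp ?_⟩
  rw [hφ, LinearEquiv.apply_symm_apply, hxf]

theorem intCast_eq_of_x_eq_zero (h : IsoToVklC n V x k l) {u : V i} (hu : u ≠ 0)
    (hxu : x i u = 0) : (k : ZMod (n + 1)) = i := by
  obtain ⟨φ, hφ⟩ := h
  exact intCast_eq_of_xklC_eq_zero ((φ i).map_ne_zero_iff.mpr hu) (by rw [← hφ, hxu, map_zero])

end IsoToVklC

theorem isoToVklC_unique {k' l' : ℤ} (hkl : k ≤ l) (hk'l' : k' ≤ l') (h : IsoToVklC n V x k l)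
    (h' : IsoToVklC n V x k' l') :
    ∃ m : ℤ, k' = k + m * (n + 1) ∧ l' = l + m * (n + 1) := by
  have hlen : l' - k' = l - k := by
    have := h'.sum_finrank.symm.trans h.sum_finrank
    omega
  obtain ⟨u, hu, hxu⟩ := h.exists_ne_zero_x_eq_zero hkl
  obtain ⟨m, hm⟩ := (ZMod.intCast_eq_intCast_iff_dvd_sub k k' (n + 1)).mp
    (h'.intCast_eq_of_x_eq_zero hu hxu).symm
  exact ⟨m, by push_cast at hm; linarith, by push_cast at hm; linarith⟩

end IntervalRepresentation

section NilpotentString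

open Submodule

variable {R M : Type*} [Ring R] [AddCommGroup M] [Module R M] {X : Module.End R M} {N : ℕ}
  {v : M}

theorem pow_apply_mem_span_pow_apply (hX : X ^ N = 0) (s : ℕ) :
    (X ^ s) v ∈ span R (Set.range fun t : Fin N => (X ^ (t : ℕ)) v) := by
  by_cases hs : s < N
  · exact subset_span ⟨⟨s, hs⟩, rfl⟩
  · rw [pow_eq_zero_of_le (not_lt.mp hs) hX, LinearMap.zero_apply]
    exact zero_mem _

theorem apply_mem_span_pow_apply (hX : X ^ N = 0) {u : M}
    (hu : u ∈ span R (Set.range fun t : Fin N => (X ^ (t : ℕ)) v)) :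
    X u ∈ span R (Set.range fun t : Fin N => (X ^ (t : ℕ)) v) := by
  induction hu using span_induction with
  | mem u hu =>
    obtain ⟨t, rfl⟩ := hu
    rw [← Module.End.mul_apply, ← pow_succ']
    exact pow_apply_mem_span_pow_apply hX _
  | zero => simp
  | add a b _ _ ha hb => simpa using add_mem ha hb
  | smul r a _ ha => simpa using smul_mem _ r ha

theorem apply_mem_iInf_ker_comp_pow {f : M →ₗ[R] R} {u : M}
    (hu : u ∈ ⨅ j : ℕ, LinearMap.ker (f ∘ₗ X ^ j)) :
    X u ∈ ⨅ j : ℕ, LinearMap.ker (f ∘ₗ X ^ j) := by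
  simp only [mem_iInf, LinearMap.mem_ker, LinearMap.comp_apply] at hu ⊢
  intro j
  simpa [pow_succ] using hu (j + 1)

theorem dual_pow_apply_sum {f : M →ₗ[R] R} (hf : ∀ s, f ((X ^ s) v) = if s + 1 = N then 1 else 0)
    (a : Fin N → R) (t : Fin N) :
    f ((X ^ (N - 1 - t)) (∑ s : Fin N, a s • (X ^ (s : ℕ)) v)) = a t := by
  simp only [map_sum, map_smul, ← Module.End.mul_apply, ← pow_add, hf, smul_eq_mul, mul_ite,
    mul_one, mul_zero]
  rw [Finset.sum_eq_single t (fun s _ hs => if_neg (by omega)) (by simp), if_pos (by omega)]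

theorem isCompl_span_pow_apply_iInf_ker (hX : X ^ N = 0) {f : M →ₗ[R] R}
    (hf : ∀ s, f ((X ^ s) v) = if s + 1 = N then 1 else 0) :
    IsCompl (span R (Set.range fun s : Fin N => (X ^ (s : ℕ)) v))
      (⨅ j : ℕ, LinearMap.ker (f ∘ₗ X ^ j)) := by
  refine ⟨disjoint_def.mpr fun u hu hu' => ?_, codisjoint_iff.mpr (eq_top_iff.mpr fun u _ => ?_)⟩
  · obtain ⟨a, rfl⟩ := mem_span_range_iff_exists_fun R |>.mp hu
    simp only [mem_iInf, LinearMap.mem_ker, LinearMap.comp_apply] at hu'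
    have ha : a = 0 := funext fun t => by rw [← dual_pow_apply_sum hf a t, hu']; rfl
    simp [ha]
  · -- the projection onto the string along the common kernel
    set p := ∑ s : Fin N, f ((X ^ (N - 1 - s)) u) • (X ^ (s : ℕ)) v
    have hp : p ∈ span R (Set.range fun s : Fin N => (X ^ (s : ℕ)) v) :=
      sum_mem fun s _ => smul_mem _ _ (subset_span ⟨s, rfl⟩)
    have hup : u - p ∈ ⨅ j : ℕ, LinearMap.ker (f ∘ₗ X ^ j) := by
      simp only [mem_iInf, LinearMap.mem_ker, LinearMap.comp_apply, map_sub, sub_eq_zero]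
      intro j
      by_cases hj : j < N
      · have := dual_pow_apply_sum hf (fun s => f ((X ^ (N - 1 - s)) u)) ⟨N - 1 - j, by omega⟩
        simp only [show N - 1 - (N - 1 - j) = j by omega] at this
        exact this.symm
      · rw [pow_eq_zero_of_le (not_lt.mp hj) hX]
        simp
    simpa using add_mem_sup hp hup

end NilpotentString

section NilpotentStringOverField

variable {K M : Type*} [Field K] [AddCommGroup M] [Module K M] {X : Module.End K M} {N : ℕ}
  {v : M}

theorem linearIndependent_pow_apply (hX : X ^ N = 0) (hv : (X ^ (N - 1)) v ≠ 0) :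
    LinearIndependent K (fun s : Fin N => (X ^ (s : ℕ)) v) := by
  refine Fintype.linearIndependent_iff.mpr fun a ha t => ?_
  induction t using Fin.strong_induction_on with
  | _ t ih =>
    -- applying `X ^ (N - 1 - t)` kills every term but the `t`-th
    have h := congrArg (X ^ (N - 1 - (t : ℕ))) ha
    simp only [map_sum, map_smul, ← Module.End.mul_apply, ← pow_add, map_zero] at h
    rw [Finset.sum_eq_single t (fun s _ hs => ?_) (fun h => (h (Finset.mem_univ t)).elim),
      show N - 1 - t + t = N - 1 by omega, smul_eq_zero] at h
    · exact h.resolve_right hv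
    · rcases lt_or_gt_of_ne hs with hs | hs
      · rw [ih s hs, zero_smul]
      · rw [pow_eq_zero_of_le (by omega) hX, LinearMap.zero_apply, smul_zero]

theorem exists_dual_pow_apply (hX : X ^ N = 0) (hv : (X ^ (N - 1)) v ≠ 0) :
    ∃ f : Module.Dual K M, ∀ s, f ((X ^ s) v) = if s + 1 = N then 1 else 0 := by
  have hN : 0 < N := Nat.pos_of_ne_zero <| by
    rintro rfl
    exact hv (by rw [Nat.zero_sub, hX, LinearMap.zero_apply])
  have hli := linearIndependent_pow_apply hX hv
  obtain ⟨f, hf, hf0⟩ := Submodule.exists_dual_map_eq_bot_of_notMem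
    (hli.notMem_span_image (s := {t | (t : ℕ) ≠ N - 1}) (x := ⟨N - 1, by omega⟩) (by simp))
    inferInstance
  refine ⟨(f ((X ^ (N - 1)) v))⁻¹ • f, fun s => ?_⟩
  rcases lt_trichotomy (s + 1) N with hs | hs | hs
  · have : (X ^ s) v ∈ Submodule.span K ((fun t : Fin N => (X ^ (t : ℕ)) v) ''
        {t | (t : ℕ) ≠ N - 1}) := Submodule.subset_span ⟨⟨s, by omega⟩, by simp; omega, rfl⟩
    have hfs : f ((X ^ s) v) = 0 := by
      simpa [hf0] using Submodule.mem_map_of_mem (f := f) this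
    simp [hfs, hs.ne]
  · obtain rfl : s = N - 1 := by omega
    simp [hs, hf]
  · simp [pow_eq_zero_of_le (show N ≤ s by omega) hX, hs.ne']

end NilpotentStringOverField

section PiGraded

variable {ι R : Type*} [DecidableEq ι] [Semiring R] {V : ι → Type*}
  [∀ i, AddCommMonoid (V i)] [∀ i, Module R (V i)]

def Submodule.IsGraded (S : Submodule R (∀ i, V i)) : Prop :=
  ∀ u ∈ S, ∀ i, Pi.single i (u i) ∈ S

theorem Pi.single_apply_self_of_forall_ne {u : ∀ i, V i} {j : ι} (hu : ∀ i ≠ j, u i = 0) :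
    Pi.single j (u j) = u := by
  funext i
  by_cases h : i = j
  · subst h; simp
  · simp [Pi.single_eq_of_ne h, hu i h]

theorem Submodule.isGraded_span {s : Set (∀ i, V i)} (hs : ∀ u ∈ s, ∃ j, ∀ i ≠ j, u i = 0) :
    (span R s).IsGraded := by
  intro u hu i
  induction hu using span_induction with
  | mem u hu =>
    obtain ⟨j, hj⟩ := hs u hu
    by_cases h : i = j
    · subst h
      rw [Pi.single_apply_self_of_forall_ne hj]
      exact subset_span hu
    · simp [hj i h]
  | zero => simp
  | add a b _ _ ha hb => simpa [Pi.single_add] using add_mem ha hb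
  | smul r a _ ha => simpa [Pi.single_smul] using smul_mem _ r ha

theorem Submodule.IsGraded.isCompl_comap_single {S T : Submodule R (∀ i, V i)} (hS : S.IsGraded)
    (hT : T.IsGraded) (hST : IsCompl S T) (i : ι) :
    IsCompl (S.comap (LinearMap.single R V i)) (T.comap (LinearMap.single R V i)) := by
  refine ⟨disjoint_def.mpr fun w hwS hwT => Pi.single_injective i ?_,
    codisjoint_iff.mpr (eq_top_iff.mpr fun w _ => ?_)⟩
  · simpa using disjoint_def.mp hST.disjoint _ hwS hwT
  · obtain ⟨a, ha, b, hb, hab⟩ := mem_sup.mp (hST.codisjoint.eq_top ▸ mem_top (x := Pi.single i w))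
    have hw : a i + b i = w := by simpa using congrFun hab i
    exact hw ▸ add_mem_sup (hS a ha i) (hT b hb i)

theorem Submodule.IsGraded.eq_bot {S : Submodule R (∀ i, V i)} (hS : S.IsGraded)
    (h : ∀ i, S.comap (LinearMap.single R V i) = ⊥) : S = ⊥ := by
  refine (Submodule.eq_bot_iff S).mpr fun u hu => funext fun i => ?_
  have : u i ∈ S.comap (LinearMap.single R V i) := hS u hu i
  rw [h i] at this
  exact (mem_bot R).mp this

def Module.Basis.ofHomogeneous {κ : Type*} [Fintype κ] (b : Module.Basis κ R (∀ i, V i))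
    (deg : κ → ι) (hb : ∀ a, ∀ i ≠ deg a, b a i = 0) (i : ι) :
    Module.Basis {a // deg a = i} R (V i) :=
  .mk (v := fun a => b a i)
    (LinearIndependent.of_comp (LinearMap.single R V i) <| by
      convert b.linearIndependent.comp _ Subtype.val_injective
      funext ⟨a, ha⟩
      subst ha
      exact Pi.single_apply_self_of_forall_ne (hb a))
    (fun w _ => by
      rw [← Pi.single_eq_same i w, ← b.sum_repr (Pi.single i w), Finset.sum_apply]
      refine Submodule.sum_mem _ fun a _ => ?_
      by_cases h : deg a = i
      · exact Submodule.smul_mem _ _ (Submodule.subset_span ⟨⟨a, h⟩, rfl⟩)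
      · simp [hb a i (Ne.symm h)])

@[simp]
theorem Module.Basis.ofHomogeneous_apply {κ : Type*} [Fintype κ]
    (b : Module.Basis κ R (∀ i, V i)) (deg : κ → ι) (hb : ∀ a, ∀ i ≠ deg a, b a i = 0) (i : ι)
    (a : {a // deg a = i}) :
    b.ofHomogeneous deg hb i a = b a i :=
  Module.Basis.mk_apply _ _ _

variable [Fintype ι]

theorem Submodule.isGraded_iInf_ker {κ : Type*} (f : κ → (∀ i, V i) →ₗ[R] R) (deg : κ → ι)
    (hf : ∀ j, ∀ i ≠ deg j, ∀ w : V i, f j (Pi.single i w) = 0) :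
    (⨅ j, LinearMap.ker (f j)).IsGraded := by
  intro u hu i
  simp only [mem_iInf, LinearMap.mem_ker] at hu ⊢
  intro j
  by_cases h : i = deg j
  · subst h
    rw [← hu j]
    conv_rhs => rw [← Finset.univ_sum_single u, map_sum]
    exact (Finset.sum_eq_single _ (fun i' _ h' => hf j i' h' _) (by simp)).symm
  · exact hf j i h _

end PiGraded

/-- The vector `X ^ s v` of a string of length `N` starting in degree `c` becomes the basis
vector `e_(l - s)` of `V(l + 1 - N, l)`, where `l` lifts `c`. -/
def finStringEquivVklIdx {n N : ℕ} {c : ZMod (n + 1)} {l : ℤ} (hl : (l : ZMod (n + 1)) = c)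
    (i : ZMod (n + 1)) :
    {s : Fin N // c - (s : ℕ) = i} ≃ VklIdx n (l + 1 - N) l i where
  toFun s := ⟨l - (s.1 : ℕ), by have := s.1.2; omega, by omega, by push_cast; rw [hl, s.2]⟩
  invFun r := ⟨⟨(l - r.1).toNat, by have := r.2; omega⟩, by
    have := r.2
    change c - (((l - r.1).toNat : ℕ) : ZMod (n + 1)) = i
    rw [← Int.cast_natCast, Int.toNat_of_nonneg (by omega), Int.cast_sub, hl, this.2.2,
      sub_sub_cancel]⟩
  left_inv s := by ext; simp
  right_inv r := by ext; have := r.2; simp; omega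

section TotalMap

variable {n : ℕ} {V : ZMod (n + 1) → Type*} [∀ i, AddCommGroup (V i)] [∀ i, Module ℂ (V i)]
  (x : ∀ i, V i →ₗ[ℂ] V (i - 1))

/-- The representation as a single endomorphism of `⨁ i, V i`, of degree `-1`. -/
def totalMap : Module.End ℂ (∀ i, V i) :=
  ∑ i, LinearMap.single ℂ V (i - 1) ∘ₗ x i ∘ₗ LinearMap.proj i

theorem totalMap_single (i : ZMod (n + 1)) (w : V i) :
    totalMap x (Pi.single i w) = Pi.single (i - 1) (x i w) := by
  simp only [totalMap, LinearMap.sum_apply, LinearMap.comp_apply, LinearMap.proj_apply]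
  rw [Finset.sum_eq_single i (fun j _ hj => by simp [Pi.single_eq_of_ne hj]) (by simp)]
  simp

theorem totalMap_apply_sub_one (u : ∀ i, V i) (i : ZMod (n + 1)) :
    totalMap x u (i - 1) = x i (u i) := by
  simp only [totalMap, LinearMap.sum_apply, Finset.sum_apply, LinearMap.comp_apply,
    LinearMap.proj_apply]
  rw [Finset.sum_eq_single i (fun j _ hj => Pi.single_eq_of_ne (by simpa using hj.symm) _)
    (by simp)]
  simp

theorem single_castLM {i j : ZMod (n + 1)} (h : i = j) (w : V i) :
    Pi.single j (castLM V h w) = Pi.single i w := by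
  subst h
  rfl

theorem totalMap_pow_single (m : ℕ) (i : ZMod (n + 1)) (w : V i) :
    (totalMap x ^ m) (Pi.single i w) = Pi.single (i - m) (compN n V x m i w) := by
  induction m generalizing i w with
  | zero => simp [compN, single_castLM]
  | succ m ih => rw [pow_succ, Module.End.mul_apply, totalMap_single, ih, compN,
      LinearMap.comp_apply, LinearMap.comp_apply, single_castLM]

theorem totalMap_pow_single_apply_of_ne {m : ℕ} {i j : ZMod (n + 1)} (w : V i)
    (h : j ≠ i - m) : (totalMap x ^ m) (Pi.single i w) j = 0 := by
  rw [totalMap_pow_single, Pi.single_eq_of_ne h]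

theorem totalMap_pow_eq_zero {N : ℕ} (h : ∀ i, compN n V x N i = 0) : totalMap x ^ N = 0 :=
  LinearMap.pi_ext fun i w => by simp [totalMap_pow_single, h]

theorem x_mem_comap_single {S : Submodule ℂ (∀ i, V i)} (hS : ∀ u ∈ S, totalMap x u ∈ S)
    (i : ZMod (n + 1)) (w : V i) (hw : w ∈ S.comap (LinearMap.single ℂ V i)) :
    x i w ∈ S.comap (LinearMap.single ℂ V (i - 1)) := by
  simpa [totalMap_single] using hS _ hw

variable {x}

theorem x_apply_totalMap_pow (u : ∀ i, V i) (m : ℕ) (i : ZMod (n + 1)) :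
    x i ((totalMap x ^ m) u i) = (totalMap x ^ (m + 1)) u (i - 1) := by
  rw [pow_succ', Module.End.mul_apply, totalMap_apply_sub_one]

theorem isoToVklC_of_basis_pow {N : ℕ} {c : ZMod (n + 1)} {w : V c}
    (b : Module.Basis (Fin N) ℂ (∀ i, V i)) (hb : ∀ s, b s = (totalMap x ^ (s : ℕ)) (Pi.single c w))
    (hN : (totalMap x ^ N) (Pi.single c w) = 0) {l : ℤ} (hl : (l : ZMod (n + 1)) = c) :
    IsoToVklC n V x (l + 1 - N) l := by
  have hdeg : ∀ s : Fin N, ∀ i ≠ c - (s : ℕ), b s i = 0 := fun s i hi => by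
    rw [hb, totalMap_pow_single_apply_of_ne x w hi]
  let B i := (b.ofHomogeneous _ hdeg i).reindex (finStringEquivVklIdx hl i)
  have hB : ∀ i r, B i r = (totalMap x ^ (l - r.1).toNat) (Pi.single c w) i := fun i r => by
    simp [B, hb, finStringEquivVklIdx]
  refine isoToVklC_of_basis B (fun i r r' hr' => ?_) (fun i r hr => ?_)
  · rw [hB, hB, x_apply_totalMap_pow, show (l - r'.1).toNat = (l - r.1).toNat + 1 by omega]
  · have := r.2
    rw [hB, x_apply_totalMap_pow, show (l - r.1).toNat + 1 = N by omega, hN, Pi.zero_apply]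

theorem exists_dual_pow_totalMap_single {N : ℕ} {c : ZMod (n + 1)} {w : V c}
    (hX : totalMap x ^ N = 0) (hv : (totalMap x ^ (N - 1)) (Pi.single c w) ≠ 0) :
    ∃ f : (∀ i, V i) →ₗ[ℂ] ℂ,
      (∀ s, f ((totalMap x ^ s) (Pi.single c w)) = if s + 1 = N then 1 else 0) ∧
      ∀ i ≠ c - (N - 1 : ℕ), ∀ u : V i, f (Pi.single i u) = 0 := by
  obtain ⟨f, hf⟩ := exists_dual_pow_apply hX hv
  -- supported in a single degree, so that `⋂ j, ker (f ∘ₗ X ^ j)` is graded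
  refine ⟨f ∘ₗ LinearMap.single ℂ V (c - (N - 1 : ℕ)) ∘ₗ LinearMap.proj (c - (N - 1 : ℕ)),
    fun s => ?_, fun i hi u => by simp [Pi.single_eq_of_ne (Ne.symm hi)]⟩
  simp only [LinearMap.comp_apply, LinearMap.proj_apply, LinearMap.coe_single]
  by_cases hs : c - (s : ℕ) = c - (N - 1 : ℕ)
  · rw [← hs, Pi.single_apply_self_of_forall_ne fun i hi => totalMap_pow_single_apply_of_ne x w hi,
      hf]
  · rw [totalMap_pow_single_apply_of_ne x w (Ne.symm hs), Pi.single_zero, map_zero,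
      if_neg fun h => hs (by rw [← h, Nat.add_sub_cancel])]

theorem exists_basis_pow_totalMap_single (hX : IsNilpotent (totalMap x))
    (hnonzero : ∃ i : ZMod (n + 1), Nontrivial (V i))
    (hindec : ∀ W W' : ∀ i : ZMod (n + 1), Submodule ℂ (V i),
      (∀ i, ∀ v ∈ W i, x i v ∈ W (i - 1)) →
      (∀ i, ∀ v ∈ W' i, x i v ∈ W' (i - 1)) →
      (∀ i, IsCompl (W i) (W' i)) →
      (∀ i, W i = ⊥) ∨ (∀ i, W' i = ⊥)) :
    ∃ (c : ZMod (n + 1)) (w : V c) (N : ℕ) (b : Module.Basis (Fin N) ℂ (∀ i, V i)),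
      0 < N ∧ (∀ s, b s = (totalMap x ^ (s : ℕ)) (Pi.single c w)) ∧
      (totalMap x ^ N) (Pi.single c w) = 0 := by
  obtain ⟨i₀, hi₀⟩ := hnonzero
  have : Nontrivial (∀ i, V i) := Pi.nontrivial_at i₀
  set X := totalMap x
  set N := nilpotencyClass X
  have hXN : X ^ N = 0 := pow_nilpotencyClass hX
  have hN : 0 < N := pos_nilpotencyClass_iff.mpr hX
  obtain ⟨c, w, hv⟩ : ∃ c w, (X ^ (N - 1)) (Pi.single c w) ≠ 0 := by
    by_contra! h
    exact pow_pred_nilpotencyClass hX (LinearMap.pi_ext fun i w => by simpa using h i w)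
  obtain ⟨f, hf, hf_supp⟩ := exists_dual_pow_totalMap_single hXN hv
  set U := Submodule.span ℂ (Set.range fun s : Fin N => (X ^ (s : ℕ)) (Pi.single c w))
  set W := ⨅ j : ℕ, LinearMap.ker (f ∘ₗ X ^ j)
  have hUW : IsCompl U W := isCompl_span_pow_apply_iInf_ker hXN hf
  have hU : U.IsGraded := Submodule.isGraded_span <| by
    rintro _ ⟨s, rfl⟩
    exact ⟨_, fun i hi => totalMap_pow_single_apply_of_ne x w hi⟩
  have hW : W.IsGraded := Submodule.isGraded_iInf_ker _ (fun j => c - (N - 1 : ℕ) + j)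
    fun j i hi u => by
      simp only [LinearMap.comp_apply, X, totalMap_pow_single]
      exact hf_supp _ (fun h => hi (by rw [← h, sub_add_cancel])) _
  have hWbot : W = ⊥ := by
    refine hW.eq_bot ((hindec _ _ (x_mem_comap_single x fun _ => apply_mem_span_pow_apply hXN)
      (x_mem_comap_single x fun _ => apply_mem_iInf_ker_comp_pow)
      (hU.isCompl_comap_single hW hUW)).resolve_left fun h => hv ?_)
    have hw : w ∈ U.comap (LinearMap.single ℂ V c) := Submodule.subset_span ⟨⟨0, hN⟩, by simp⟩
    rw [h c, Submodule.mem_bot] at hw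
    simp [hw]
  have hUtop : U = ⊤ := by simpa [hWbot] using hUW.sup_eq_top
  exact ⟨c, w, N, .mk (linearIndependent_pow_apply hXN hv) hUtop.ge, hN,
    fun s => Module.Basis.mk_apply .., by simp [hXN]⟩

end TotalMap

theorem stmt11_general (n : ℕ)
    (V : ZMod (n + 1) → Type*) [∀ i, AddCommGroup (V i)] [∀ i, Module ℂ (V i)]
    (x : ∀ i : ZMod (n + 1), V i →ₗ[ℂ] V (i - 1))
    -- nilpotent
    (hnilp : ∃ N : ℕ, 1 ≤ N ∧ ∀ i : ZMod (n + 1), compN n V x N i = 0)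
    -- nonzero
    (hnonzero : ∃ i : ZMod (n + 1), Nontrivial (V i))
    -- indecomposable
    (hindec : ∀ W W' : ∀ i : ZMod (n + 1), Submodule ℂ (V i),
      (∀ i, ∀ v ∈ W i, x i v ∈ W (i - 1)) →
      (∀ i, ∀ v ∈ W' i, x i v ∈ W' (i - 1)) →
      (∀ i, IsCompl (W i) (W' i)) →
      (∀ i, W i = ⊥) ∨ (∀ i, W' i = ⊥)) :
    -- (V,x) ≅ (V(k,l), x(k,l)) for some k ≤ l...
    (∃ k l : ℤ, k ≤ l ∧ IsoToVklC n V x k l) ∧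
    -- ...and (k,l) is unique up to simultaneous translation by a multiple of n+1
    (∀ k l k' l' : ℤ, k ≤ l → k' ≤ l' →
      IsoToVklC n V x k l → IsoToVklC n V x k' l' →
      ∃ m : ℤ, k' = k + m * (n + 1) ∧ l' = l + m * (n + 1)) := by
  refine ⟨?_, fun k l k' l' hkl hk'l' h h' => isoToVklC_unique hkl hk'l' h h'⟩
  obtain ⟨N₀, -, hN₀⟩ := hnilp
  obtain ⟨c, w, N, b, hN, hb, hXN⟩ :=
    exists_basis_pow_totalMap_single ⟨N₀, totalMap_pow_eq_zero x hN₀⟩ hnonzero hindec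
  exact ⟨(c.val : ℤ) + 1 - N, c.val, by omega, isoToVklC_of_basis_pow b hb hXN (by simp)⟩

theorem stmt11 (n : ℕ) (hn : 1 ≤ n)
    (V : ZMod (n + 1) → Type*) [∀ i, AddCommGroup (V i)] [∀ i, Module ℂ (V i)]
    [∀ i, FiniteDimensional ℂ (V i)]
    (x : ∀ i : ZMod (n + 1), V i →ₗ[ℂ] V (i - 1))
    -- nilpotent
    (hnilp : ∃ N : ℕ, 1 ≤ N ∧ ∀ i : ZMod (n + 1), compN n V x N i = 0)
    -- nonzero
    (hnonzero : ∃ i : ZMod (n + 1), Nontrivial (V i))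
    -- indecomposable
    (hindec : ∀ W W' : ∀ i : ZMod (n + 1), Submodule ℂ (V i),
      (∀ i, ∀ v ∈ W i, x i v ∈ W (i - 1)) →
      (∀ i, ∀ v ∈ W' i, x i v ∈ W' (i - 1)) →
      (∀ i, IsCompl (W i) (W' i)) →
      (∀ i, W i = ⊥) ∨ (∀ i, W' i = ⊥)) :
    -- (V,x) ≅ (V(k,l), x(k,l)) for some k ≤ l...
    (∃ k l : ℤ, k ≤ l ∧ IsoToVklC n V x k l) ∧
    -- ...and (k,l) is unique up to simultaneous translation by a multiple of n+1
    (∀ k l k' l' : ℤ, k ≤ l → k' ≤ l' →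
      IsoToVklC n V x k l → IsoToVklC n V x k' l' →
      ∃ m : ℤ, k' = k + m * (n + 1) ∧ l' = l + m * (n + 1)) :=
  stmt11_general n V x hnilp hnonzero hindec

end
end
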